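/- There exists a set E ⊆ ℂ^n of Lebesgue measure zero such that for all g ∈ ℂ^n ∖ E, the map x ↦ (|V_g x(λ)|²)_{λ∈(ℤ_n)²} is injective modulo global phase, i.e., the Gabor system (π(λ)g)_{λ∈(ℤ_n)²} allows phase retrieval. -/

import Mathlib

open scoped Real ComplexConjugate BigOperators

/-- The character `m ↦ e^{2πi m/N}` on `ℤ_N`. -/
noncomputable def zchar (N : ℕ) [NeZero N] (m : ZMod N) : ℂ :=
  Complex.exp (2 * π * Complex.I * (m.val : ℝ) / N)

/-- Circular translation `(T_k x)_j = x_{j-k}` on `ℂ^N`. -/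
def tshift {N : ℕ} [NeZero N] (k : ZMod N) (x : ZMod N → ℂ) : ZMod N → ℂ :=
  fun j => x (j - k)

/-- Modulation `(M_l x)_j = e^{2πi jl/N} x_j` on `ℂ^N`. -/
noncomputable def mshift {N : ℕ} [NeZero N] (l : ZMod N) (x : ZMod N → ℂ) : ZMod N → ℂ :=
  fun j => zchar N (j * l) * x j

/-- Time-frequency shift `π(k,l) = M_l T_k`. -/
noncomputable def tfshift {N : ℕ} [NeZero N] (p : ZMod N × ZMod N)
    (x : ZMod N → ℂ) : ZMod N → ℂ :=
  mshift p.2 (tshift p.1 x)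

/-- The discrete short-time Fourier transform `V_g x(λ) = ⟨x, π(λ)g⟩`. -/
noncomputable def dstft {N : ℕ} [NeZero N] (g x : ZMod N → ℂ)
    (p : ZMod N × ZMod N) : ℂ :=
  ∑ n : ZMod N, x n * conj (tfshift p g n)

/-!
The symplectic Fourier transform of the spectrogram `|V_g x|²` factors as
`N · V_x x · conj (V_g g)`: in each time slice it is a discrete Wiener–Khinchin identity, and the
remaining sum over time shifts is a correlation. So if the ambiguity function `V_g g` of the
window never vanishes, `|V_g x|` determines `V_x x`; since `V_x x (b, ·)` is the discrete Fourier
transform of `n ↦ x n · conj (x (n - b))`, this determines all products `x p · conj (x q)`, hence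
`x` up to a global phase. For a fixed `λ = (k, l)`, the equation `V_g g λ = 0` is, in the
coordinate `g 0`, a circle if `k = 0`, and otherwise a real-affine equation that is nondegenerate
unless `g (-k) = 0`; so by Fubini the windows with a zero of `V_g g` form a null set.
-/

open ZMod Finset MeasureTheory

theorem AddChar.sum_sum_mul_sub_mul {G R : Type*} [AddCommGroup G] [Fintype G] [CommRing R]
    (χ : AddChar G R) (u v : G → R) :
    ∑ k, (∑ s, u s * v (s - k)) * χ k = (∑ s, u s * χ s) * ∑ j, v j * χ (-j) := by
  calc ∑ k, (∑ s, u s * v (s - k)) * χ k = ∑ s, ∑ k, u s * v (s - k) * χ k := by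
        simp only [sum_mul]; exact sum_comm
    _ = ∑ s, ∑ j, u s * v j * χ (s - j) := by
        refine sum_congr rfl fun s _ => Fintype.sum_equiv (Equiv.subLeft s) _ _ fun k => ?_
        simp
    _ = (∑ s, u s * χ s) * ∑ j, v j * χ (-j) := by
        simp only [sum_mul_sum, sub_eq_add_neg, AddChar.map_add_eq_mul]
        exact sum_congr rfl fun s _ => sum_congr rfl fun j _ => by ring

theorem ZMod.sum_norm_sq_dft_mul_stdAddChar {N : ℕ} [NeZero N] (f : ZMod N → ℂ) (b : ZMod N) :
    ∑ l, (‖𝓕 f l‖ ^ 2 : ℂ) * stdAddChar (b * l) = N * ∑ s, f s * conj (f (s - b)) := by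
  calc ∑ l, (‖𝓕 f l‖ ^ 2 : ℂ) * stdAddChar (b * l)
      = ∑ s, ∑ t, f s * conj (f t) * ∑ l, stdAddChar (l * (t + b - s)) := by
        simp only [← Complex.mul_conj', dft_apply, smul_eq_mul, map_sum, map_mul,
          ← AddChar.map_neg_eq_conj, neg_neg, sum_mul]
        simp only [sum_mul, mul_sum]
        rw [sum_comm]
        refine sum_congr rfl fun s _ => ?_
        rw [sum_comm]
        refine sum_congr rfl fun t _ => sum_congr rfl fun l _ => ?_
        rw [show l * (t + b - s) = -(s * l) + t * l + b * l by ring, AddChar.map_add_eq_mul,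
          AddChar.map_add_eq_mul]
        ring
    _ = N * ∑ s, f s * conj (f (s - b)) := by
        simp only [AddChar.sum_mulShift _ (isPrimitive_stdAddChar N), sub_eq_zero,
          ← eq_sub_iff_add_eq, ZMod.card, mul_sum]
        refine sum_congr rfl fun s _ => ?_
        rw [Fintype.sum_eq_single (s - b) fun t ht => by simp [ht], if_pos rfl]
        ring

theorem exists_eq_exp_mul_of_mul_conj_eq {ι : Type*} {x y : ι → ℂ}
    (h : ∀ p q, x p * conj (x q) = y p * conj (y q)) :
    ∃ θ : ℝ, y = fun j => Complex.exp (θ * Complex.I) * x j := by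
  rcases eq_or_ne x 0 with rfl | hx
  · refine ⟨0, funext fun j => ?_⟩
    have := h j j
    rw [Pi.zero_apply, zero_mul, eq_comm, mul_eq_zero, map_eq_zero, or_self] at this
    simp [this]
  obtain ⟨q, hq⟩ := Function.ne_iff.mp hx
  have hnorm : ‖y q / x q‖ = 1 := by
    have hsq : ‖y q‖ ^ 2 = ‖x q‖ ^ 2 := by
      exact_mod_cast (Complex.mul_conj' _).symm.trans ((h q q).symm.trans (Complex.mul_conj' _))
    rw [norm_div, (pow_left_inj₀ (norm_nonneg _) (norm_nonneg _) two_ne_zero).mp hsq,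
      div_self (norm_ne_zero_iff.mpr hq)]
  refine ⟨(y q / x q).arg, funext fun p => ?_⟩
  have hu : Complex.exp ((y q / x q).arg * Complex.I) = y q / x q := by
    simpa only [hnorm, Complex.ofReal_one, one_mul] using
      Complex.norm_mul_exp_arg_mul_I (y q / x q)
  rw [hu, div_mul_eq_mul_div, eq_div_iff hq]
  apply mul_right_cancel₀ ((map_ne_zero (starRingEnd ℂ)).mpr hq)
  linear_combination y p * h q q - y q * h p q

theorem MeasureTheory.Measure.pi_eq_zero_of_update_preimage_eq_zero {ι : Type*} [Fintype ι]
    [DecidableEq ι] {X : ι → Type*} [∀ i, MeasurableSpace (X i)] (μ : ∀ i, Measure (X i))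
    [∀ i, SigmaFinite (μ i)] (i : ι) {S : Set (∀ i, X i)} (hS : MeasurableSet S)
    (h : ∀ x, μ i (Function.update x i ⁻¹' S) = 0) : Measure.pi μ S = 0 := by
  rcases isEmpty_or_nonempty (∀ i, X i) with hX | hX
  · simp [Set.eq_empty_of_isEmpty S]
  have hslice : (fun x => ∫⁻ z, S.indicator 1 (Function.update x i z) ∂μ i) = 0 :=
    funext fun x => (lintegral_indicator_one (measurable_update x hS)).trans (h x)
  rw [← lintegral_indicator_one hS, lintegral_eq_lmarginal_univ hX.some,
    lmarginal_erase' _ (measurable_one.indicator hS) (mem_univ i), hslice]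
  simp [lmarginal]

theorem MeasureTheory.Measure.addHaar_preimage_singleton_of_linearMap_ne_zero {E F : Type*}
    [NormedAddCommGroup E] [NormedSpace ℝ E] [MeasurableSpace E] [BorelSpace E]
    [FiniteDimensional ℝ E] (μ : Measure E) [μ.IsAddHaarMeasure] [AddCommGroup F] [Module ℝ F]
    {L : E →ₗ[ℝ] F} (hL : L ≠ 0) (c : F) : μ (L ⁻¹' {c}) = 0 := by
  rcases (L ⁻¹' {c}).eq_empty_or_nonempty with h | ⟨z₀, hz₀⟩
  · simp [h]
  rw [Set.mem_preimage, Set.mem_singleton_iff] at hz₀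
  have : L ⁻¹' {c} = (fun z => -z₀ + z) ⁻¹' (LinearMap.ker L) := by
    ext z
    simp only [Set.mem_preimage, Set.mem_singleton_iff, SetLike.mem_coe, LinearMap.mem_ker,
      map_add, map_neg, hz₀, neg_add_eq_zero]
    exact eq_comm
  rw [this, measure_preimage_add]
  exact Measure.addHaar_submodule μ _ fun h => hL (LinearMap.ker_eq_top.mp h)

theorem Complex.volume_setOf_mul_add_mul_conj_add_eq_zero {α β c : ℂ} (h : α ≠ 0 ∨ β ≠ 0) :
    volume {z : ℂ | α * z + β * conj z + c = 0} = 0 := by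
  let L : ℂ →ₗ[ℝ] ℂ := α • LinearMap.id + β • Complex.conjAe.toLinearMap
  have hL : L ≠ 0 := by
    intro h0
    have h1 : α + β = 0 := by simpa [L] using LinearMap.congr_fun h0 1
    have hI : α * I - β * I = 0 := by simpa [L, sub_eq_add_neg] using LinearMap.congr_fun h0 I
    have h2 : α - β = 0 := by linear_combination (-I) * hI + (α - β) * I_sq
    rcases h with h | h
    · exact h (by linear_combination (h1 + h2) / 2)
    · exact h (by linear_combination (h1 - h2) / 2)
  convert Measure.addHaar_preimage_singleton_of_linearMap_ne_zero volume hL (-c) using 2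
  ext z
  simp [L, eq_neg_iff_add_eq_zero]

theorem Complex.volume_setOf_mul_conj_add_eq_zero (c : ℂ) :
    volume {z : ℂ | z * conj z + c = 0} = 0 := by
  refine measure_mono_null (fun z hz => ?_) (Measure.addHaar_sphere volume 0 √(-c).re)
  have hnorm : ‖z‖ ^ 2 = (-c).re := by
    have := congrArg re (eq_neg_of_add_eq_zero_left hz)
    rwa [Complex.mul_conj', ← Complex.ofReal_pow, Complex.ofReal_re] at this
  rw [mem_sphere_zero_iff_norm, ← hnorm, Real.sqrt_sq (norm_nonneg z)]

section Gabor

variable {N : ℕ} [NeZero N]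

theorem zchar_eq_stdAddChar : zchar N = ⇑(stdAddChar (N := N)) := by
  ext m
  rw [zchar, stdAddChar_apply, toCircle_apply, Complex.ofReal_natCast]

theorem dstft_eq_dft (g x : ZMod N → ℂ) (k l : ZMod N) :
    dstft g x (k, l) = 𝓕 (fun n => x n * conj (g (n - k))) l := by
  simp only [dstft, tfshift, mshift, tshift, dft_apply, zchar_eq_stdAddChar, map_mul,
    ← AddChar.map_neg_eq_conj, smul_eq_mul]
  exact sum_congr rfl fun n _ => by ring

theorem sum_norm_sq_dstft_mul_stdAddChar (g x : ZMod N → ℂ) (a b : ZMod N) :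
    ∑ p : ZMod N × ZMod N, (‖dstft g x p‖ ^ 2 : ℂ) * stdAddChar (b * p.2 - a * p.1)
      = N * dstft x x (b, a) * conj (dstft g g (b, a)) := by
  set χ := (stdAddChar (N := N)).mulShift (-a)
  calc ∑ p : ZMod N × ZMod N, (‖dstft g x p‖ ^ 2 : ℂ) * stdAddChar (b * p.2 - a * p.1)
      = ∑ k, (∑ l, (‖𝓕 (fun n => x n * conj (g (n - k))) l‖ ^ 2 : ℂ)
          * stdAddChar (b * l)) * χ k := by
        simp only [Fintype.sum_prod_type, dstft_eq_dft, sum_mul, sub_eq_add_neg,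
          AddChar.map_add_eq_mul, χ, AddChar.mulShift_apply, neg_mul, mul_assoc]
    _ = N * ∑ k, (∑ s, (x s * conj (x (s - b))) * (g (s - k - b) * conj (g (s - k)))) * χ k := by
        rw [mul_sum]
        refine sum_congr rfl fun k _ => ?_
        rw [ZMod.sum_norm_sq_dft_mul_stdAddChar, mul_assoc]
        congr 2
        refine sum_congr rfl fun s _ => ?_
        rw [sub_right_comm, map_mul, Complex.conj_conj]
        ring
    _ = N * dstft x x (b, a) * conj (dstft g g (b, a)) := by
        rw [AddChar.sum_sum_mul_sub_mul χ (fun s => x s * conj (x (s - b)))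
          (fun j => g (j - b) * conj (g j)), mul_assoc, dstft_eq_dft, dstft_eq_dft]
        simp only [dft_apply, smul_eq_mul, map_sum, map_mul, χ, AddChar.mulShift_apply,
          ← AddChar.map_neg_eq_conj, Complex.conj_conj]
        congr 2 <;> refine sum_congr rfl fun s _ => ?_ <;> ring_nf

theorem mul_conj_eq_of_dstft_self_eq {x y : ZMod N → ℂ} (h : ∀ p, dstft x x p = dstft y y p)
    (p q : ZMod N) : x p * conj (x q) = y p * conj (y q) := by
  have hdft : (fun n => x n * conj (x (n - (p - q)))) = fun n => y n * conj (y (n - (p - q))) :=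
    dft.injective <| funext fun l => by simpa only [dstft_eq_dft] using h (p - q, l)
  simpa only [sub_sub_cancel] using congrFun hdft p

theorem exists_eq_exp_mul_of_norm_dstft_eq {g : ZMod N → ℂ} (hg : ∀ p, dstft g g p ≠ 0)
    {x y : ZMod N → ℂ} (h : ∀ p, ‖dstft g x p‖ ^ 2 = ‖dstft g y p‖ ^ 2) :
    ∃ θ : ℝ, y = fun j => Complex.exp (θ * Complex.I) * x j := by
  refine exists_eq_exp_mul_of_mul_conj_eq (mul_conj_eq_of_dstft_self_eq fun ⟨b, a⟩ => ?_)
  have hspec : (N : ℂ) * dstft x x (b, a) * conj (dstft g g (b, a))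
      = N * dstft y y (b, a) * conj (dstft g g (b, a)) := by
    simp only [← sum_norm_sq_dstft_mul_stdAddChar, ← Complex.ofReal_pow, h]
  exact mul_left_cancel₀ (Nat.cast_ne_zero.mpr (NeZero.ne N))
    (mul_right_cancel₀ ((map_ne_zero _).mpr (hg (b, a))) hspec)

theorem dstft_self_add_single_zero (g : ZMod N → ℂ) (z : ℂ) (k l : ZMod N) :
    dstft (g + Pi.single 0 z) (g + Pi.single 0 z) (k, l)
      = dstft g g (k, l) + z * conj (g (-k)) + stdAddChar (-(k * l)) * g k * conj z
        + if k = 0 then z * conj z else 0 := by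
  set s : ZMod N → ℂ := Pi.single 0 z
  set w : ZMod N → ℂ := fun n => stdAddChar (-(n * l))
  have hs : ∀ n, n ≠ 0 → s n = 0 := fun n hn => Pi.single_eq_of_ne (M := fun _ => ℂ) hn z
  have hsk : ∀ n, n ≠ k → s (n - k) = 0 := fun n hn => hs _ (sub_ne_zero.mpr hn)
  calc dstft (g + s) (g + s) (k, l)
      = dstft g g (k, l) + ∑ n, w n * (s n * conj (g (n - k)))
        + ∑ n, w n * (g n * conj (s (n - k))) + ∑ n, w n * (s n * conj (s (n - k))) := by
        simp only [dstft_eq_dft, dft_apply, smul_eq_mul, Pi.add_apply, map_add,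
          ← sum_add_distrib]
        exact sum_congr rfl fun n _ => by ring
    _ = _ := by
        rw [Fintype.sum_eq_single 0 fun n hn => by simp [hs n hn],
          Fintype.sum_eq_single k fun n hn => by simp [hsk n hn],
          Fintype.sum_eq_single 0 fun n hn => by simp [hs n hn]]
        simp only [w, s, Pi.single_apply, neg_eq_zero, zero_sub, zero_mul, neg_zero,
          AddChar.map_zero_eq_one, one_mul, sub_self, if_true, apply_ite conj, map_zero,
          mul_ite, mul_zero, mul_assoc]

theorem volume_setOf_dstft_self_update_zero_eq_zero (g : ZMod N → ℂ) (k l : ZMod N)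
    (hg : k ≠ 0 → g (-k) ≠ 0) :
    volume {z : ℂ | dstft (Function.update g 0 z) (Function.update g 0 z) (k, l) = 0} = 0 := by
  have hupd (z : ℂ) : Function.update g 0 z = Function.update g 0 0 + Pi.single 0 z := by
    rw [Pi.update_eq_sub_add_single 0 g z, Pi.update_eq_sub_add_single 0 g 0, Pi.single_zero,
      add_zero]
  set g₀ := Function.update g 0 0
  simp only [hupd, dstft_self_add_single_zero]
  rcases eq_or_ne k 0 with rfl | hk
  · refine measure_mono_null (fun z hz => ?_)
      (Complex.volume_setOf_mul_conj_add_eq_zero (dstft g₀ g₀ (0, l)))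
    simp only [Set.mem_ofPred_eq, neg_zero, g₀, Function.update_self, map_zero, mul_zero,
      zero_mul, add_zero, if_true] at hz ⊢
    linear_combination hz
  refine measure_mono_null (fun z hz => ?_) (Complex.volume_setOf_mul_add_mul_conj_add_eq_zero
    (β := stdAddChar (-(k * l)) * g k) (c := dstft g₀ g₀ (k, l))
    (Or.inl ((map_ne_zero (starRingEnd ℂ)).mpr (hg hk))))
  simp only [Set.mem_ofPred_eq, g₀, Function.update_of_ne hk,
    Function.update_of_ne (neg_ne_zero.mpr hk), if_neg hk] at hz ⊢
  linear_combination hz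

theorem volume_setOf_dstft_self_eq_zero (p : ZMod N × ZMod N) :
    volume {g : ZMod N → ℂ | dstft g g p = 0} = 0 := by
  obtain ⟨k, l⟩ := p
  have hmeas : MeasurableSet {g : ZMod N → ℂ | dstft g g (k, l) = 0} := by
    refine measurableSet_eq_fun (Continuous.measurable ?_) measurable_const
    unfold dstft tfshift mshift tshift
    fun_prop
  rw [volume_pi]
  rcases eq_or_ne k 0 with rfl | hk
  · exact Measure.pi_eq_zero_of_update_preimage_eq_zero _ 0 hmeas fun g =>
      volume_setOf_dstft_self_update_zero_eq_zero g 0 l fun h => absurd rfl h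
  have hzero : Measure.pi (fun _ => volume) {g : ZMod N → ℂ | g (-k) = 0} = 0 :=
    Measure.addHaar_preimage_singleton_of_linearMap_ne_zero _
      (L := LinearMap.proj (R := ℝ) (φ := fun _ : ZMod N => ℂ) (-k))
      (fun h => by simpa using LinearMap.congr_fun h (Pi.single (-k) 1)) 0
  have hmeas' : MeasurableSet {g : ZMod N → ℂ | dstft g g (k, l) = 0 ∧ g (-k) ≠ 0} :=
    hmeas.inter (measurableSet_eq_fun (measurable_pi_apply _) measurable_const).compl
  refine measure_mono_null (fun g hg => ?_) (measure_union_null hzero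
    (Measure.pi_eq_zero_of_update_preimage_eq_zero _ 0 hmeas' fun g => ?_))
  · exact (em (g (-k) = 0)).imp id fun h => ⟨hg, h⟩
  by_cases hgk : g (-k) = 0
  · refine measure_mono_null (fun z hz => hz.2 ?_) measure_empty
    rwa [Function.update_of_ne (neg_ne_zero.mpr hk)]
  exact measure_mono_null (fun z hz => hz.1)
    (volume_setOf_dstft_self_update_zero_eq_zero g k l fun _ => hgk)

end Gabor

/-- For almost every window `g ∈ ℂ^n` (i.e., outside a set of Lebesgue measure zero),
the Gabor system `(π(λ)g)_{λ ∈ (ℤ_n)²}` does phase retrieval: `x ↦ (|V_g x(λ)|²)_λ`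
is injective modulo a global phase. -/
theorem gabor_phase_retrieval_generic_window (n : ℕ) [NeZero n] :
    ∃ E : Set (ZMod n → ℂ), volume E = 0 ∧
      ∀ g ∉ E, ∀ x y : ZMod n → ℂ,
        (∀ p : ZMod n × ZMod n, ‖dstft g x p‖ ^ 2 = ‖dstft g y p‖ ^ 2) →
        ∃ θ : ℝ, y = fun j => Complex.exp (θ * Complex.I) * x j := by
  refine ⟨⋃ p, {g | dstft g g p = 0}, measure_iUnion_null volume_setOf_dstft_self_eq_zero,
    fun g hg x y h => exists_eq_exp_mul_of_norm_dstft_eq (fun p hp => hg ?_) h⟩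
  exact Set.mem_iUnion.mpr ⟨p, hp⟩
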